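/- For positive semidefinite matrices A and B, and every scalar λ > 0, (λ A²)(A + λ1)^{-1} + (λ B²)(B + λ1)^{-1} ≥ ((A+B)/2)^{1/2} ( λA(A+λ1)^{-1} + λB(B+λ1)^{-1} ) ((A+B)/2)^{1/2} in the Loewner order. -/

import Mathlib

open scoped ComplexOrder Matrix

/-- `eigDesc M j` : the `j`-th largest (0-indexed) real part of the eigenvalues
(roots of the characteristic polynomial, with multiplicity) of `M`. -/
noncomputable def eigDesc {m : Type*} [Fintype m] [DecidableEq m]
    (M : Matrix m m ℂ) (j : ℕ) : ℝ :=
  ((M.charpoly.roots.map Complex.re).sort (· ≥ ·)).getD j 0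

/-- `svalDesc K j` : the `j`-th largest (0-indexed) singular value of `K`. -/
noncomputable def svalDesc {m n : Type*} [Fintype m] [Fintype n] [DecidableEq n]
    (K : Matrix m n ℂ) (j : ℕ) : ℝ :=
  Real.sqrt (eigDesc (Kᴴ * K) j)

/-- Real power of a Hermitian matrix, via the functional calculus. -/
noncomputable def Matrix.IsHermitian.rpow {n : Type*} [Fintype n] [DecidableEq n]
    {A : Matrix n n ℂ} (hA : A.IsHermitian) (r : ℝ) : Matrix n n ℂ :=
  hA.cfc (fun x => x ^ r)

/-- The positive semidefinite square root of a positive semidefinite matrix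
(the definition removed from Mathlib, restated verbatim). -/
noncomputable def Matrix.PosSemidef.sqrt {n 𝕜 : Type*} [Fintype n] [DecidableEq n] [RCLike 𝕜]
    {A : Matrix n n 𝕜} (hA : A.PosSemidef) : Matrix n n 𝕜 :=
  hA.1.eigenvectorUnitary.1 * Matrix.diagonal ((↑) ∘ (√·) ∘ hA.1.eigenvalues) *
  (star hA.1.eigenvectorUnitary : Matrix n n 𝕜)

/-!
Write `X = A + λ`, `Y = B + λ` and `Q = ((A + B) / 2)^{1/2}`. The resolvent identities
`λ A² X⁻¹ = λ A - λ² + λ³ X⁻¹` and `λ A X⁻¹ = λ - λ² X⁻¹`, together with `Q² = (A + B) / 2`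
and `X + Y = 2 (Q² + λ)`, turn the difference of the two sides into `λ³ G + λ² Q G Q`, where
`G = X⁻¹ + Y⁻¹ - 4 (X + Y)⁻¹`. This is positive semidefinite by the operator AM–HM
inequality, which follows from the identity `G = (X⁻¹ - Y⁻¹) (X⁻¹ + Y⁻¹)⁻¹ (X⁻¹ - Y⁻¹)`.
-/

open scoped Ring

theorem Commute.ringInverse_right {M₀ : Type*} [MonoidWithZero M₀] {a b : M₀}
    (h : Commute a b) : Commute a b⁻¹ʳ := by
  by_cases hb : IsUnit b
  · obtain ⟨u, rfl⟩ := hb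
    rw [Ring.inverse_unit]
    exact h.units_inv_right
  · rw [Ring.inverse_non_unit _ hb]
    exact Commute.zero_right a

section Ring

variable {R : Type*} [Ring R]

/-- The gap in the harmonic–arithmetic mean inequality `((x + y) / 2)⁻¹ ≤ (x⁻¹ + y⁻¹) / 2`. -/
noncomputable def harmonicGap (x y : R) : R := x⁻¹ʳ + y⁻¹ʳ - 4 * (x + y)⁻¹ʳ

theorem harmonicGap_eq_sub_mul_inverse_add_mul_sub {x y : R} (hx : IsUnit x) (hy : IsUnit y)
    (hxy : IsUnit (x + y)) :
    harmonicGap x y = (x⁻¹ʳ - y⁻¹ʳ) * (x⁻¹ʳ + y⁻¹ʳ)⁻¹ʳ * (x⁻¹ʳ - y⁻¹ʳ) := by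
  set s := x⁻¹ʳ + y⁻¹ʳ
  have hs : s = y⁻¹ʳ * (x + y) * x⁻¹ʳ := by
    rw [add_comm x, ← Ring.inverse_add_inverse (iff_of_true hy hx), add_comm]
  have hs_unit : IsUnit s := hs ▸ (hy.ringInverse.mul hxy).mul hx.ringInverse
  have hs_inv : x⁻¹ʳ * s⁻¹ʳ * y⁻¹ʳ = (x + y)⁻¹ʳ := by
    rw [hs, Ring.inverse_mul (.inr hx.ringInverse), Ring.inverse_mul (.inl hy.ringInverse),
      Ring.inverse_inverse hx, Ring.inverse_inverse hy, Ring.inverse_mul_cancel_left _ _ hx,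
      Ring.mul_inverse_cancel_right _ _ hy]
  -- `x⁻¹ - y⁻¹ = 2 x⁻¹ - s = s - 2 y⁻¹`
  calc harmonicGap x y
      = 2 * x⁻¹ʳ * (s⁻¹ʳ * s) - 4 * (x⁻¹ʳ * s⁻¹ʳ * y⁻¹ʳ) - s * s⁻¹ʳ * s
        + 2 * (s * s⁻¹ʳ) * y⁻¹ʳ := by
        rw [hs_inv, Ring.inverse_mul_cancel _ hs_unit, Ring.mul_inverse_cancel _ hs_unit,
          harmonicGap]
        simp only [s]
        noncomm_ring
    _ = (2 * x⁻¹ʳ - s) * s⁻¹ʳ * (s - 2 * y⁻¹ʳ) := by noncomm_ring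
    _ = (x⁻¹ʳ - y⁻¹ʳ) * s⁻¹ʳ * (x⁻¹ʳ - y⁻¹ʳ) := by simp only [s]; noncomm_ring

end Ring

section Algebra

variable {R A : Type*} [CommRing R] [Ring A] [Algebra R A]

theorem mul_inverse_add_smul_one {a : A} {c : R} (h : IsUnit (a + c • 1)) :
    a * (a + c • 1)⁻¹ʳ = 1 - c • (a + c • 1)⁻¹ʳ := by
  rw [eq_sub_iff_add_eq, ← smul_one_mul c (a + c • 1)⁻¹ʳ, ← add_mul,
    Ring.mul_inverse_cancel _ h]

theorem smul_mul_inverse_add_smul_one {a : A} {c : R} (h : IsUnit (a + c • 1)) :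
    c • a * (a + c • 1)⁻¹ʳ = c • 1 - c ^ 2 • (a + c • 1)⁻¹ʳ := by
  rw [smul_mul_assoc, mul_inverse_add_smul_one h, smul_sub, pow_two, mul_smul]

theorem smul_mul_self_mul_inverse_add_smul_one {a : A} {c : R} (h : IsUnit (a + c • 1)) :
    c • (a * a) * (a + c • 1)⁻¹ʳ = c • a - c ^ 2 • 1 + c ^ 3 • (a + c • 1)⁻¹ʳ := by
  rw [smul_mul_assoc, mul_assoc, mul_inverse_add_smul_one h, mul_sub, mul_one, mul_smul_comm,
    mul_inverse_add_smul_one h]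
  module

theorem resolvent_sum_sub_conj_eq_harmonicGap {a b q : A} {c : R} (hq : 2 * (q * q) = a + b)
    (ha : IsUnit (a + c • 1)) (hb : IsUnit (b + c • 1))
    (hab : IsUnit (a + c • 1 + (b + c • 1))) :
    c • (a * a) * (a + c • 1)⁻¹ʳ + c • (b * b) * (b + c • 1)⁻¹ʳ
        - q * (c • a * (a + c • 1)⁻¹ʳ + c • b * (b + c • 1)⁻¹ʳ) * q
      = c ^ 3 • harmonicGap (a + c • 1) (b + c • 1)
        + c ^ 2 • (q * harmonicGap (a + c • 1) (b + c • 1) * q) := by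
  rw [← sub_eq_zero, smul_mul_self_mul_inverse_add_smul_one ha,
    smul_mul_self_mul_inverse_add_smul_one hb, smul_mul_inverse_add_smul_one ha,
    smul_mul_inverse_add_smul_one hb, harmonicGap]
  set z := (a + c • 1 + (b + c • 1))⁻¹ʳ
  have hqz : Commute q z := by
    have hq_ab : Commute q (a + b) :=
      hq ▸ (Commute.ofNat_right q 2).mul_right ((Commute.refl q).mul_right (.refl q))
    have hq_c : Commute q (c • 1) := (Commute.one_right q).smul_right c
    refine Commute.ringInverse_right ?_
    rw [add_add_add_comm]
    exact hq_ab.add_right (hq_c.add_right hq_c)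
  -- each summand vanishes: by `hq`, by `hqz`, and since `z` inverts `a + c • 1 + (b + c • 1)`
  calc _ = c • (a + b - 2 * (q * q)) - (2 * c ^ 2) • (z * (a + b - 2 * (q * q)))
        + (4 * c ^ 2) • (q * z * q - z * (q * q))
        + (2 * c ^ 2) • (z * (a + c • 1 + (b + c • 1)) - 1) := by
        simp only [mul_add, mul_smul_comm, mul_one]
        noncomm_ring
        module
    _ = 0 := by rw [hq, sub_self, hqz.eq, mul_assoc, Ring.inverse_mul_cancel _ hab]; simp

end Algebra

namespace Matrix

variable {n 𝕜 : Type*} [Fintype n] [DecidableEq n] [RCLike 𝕜]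

section Sqrt

open scoped MatrixOrder

theorem PosSemidef.sqrt_eq_cfcSqrt {A : Matrix n n 𝕜} (hA : A.PosSemidef) :
    hA.sqrt = CFC.sqrt A := by
  rw [CFC.sqrt_eq_real_sqrt A hA.nonneg, cfcₙ_eq_cfc, hA.1.cfc_eq]
  rfl

theorem PosSemidef.sqrt_mul_self {A : Matrix n n 𝕜} (hA : A.PosSemidef) :
    hA.sqrt * hA.sqrt = A := by
  rw [hA.sqrt_eq_cfcSqrt, CFC.sqrt_mul_sqrt_self A hA.nonneg]

theorem PosSemidef.isHermitian_sqrt {A : Matrix n n 𝕜} (hA : A.PosSemidef) :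
    hA.sqrt.IsHermitian := by
  rw [hA.sqrt_eq_cfcSqrt]
  exact (nonneg_iff_posSemidef.mp (CFC.sqrt_nonneg A)).isHermitian

end Sqrt

theorem PosDef.posSemidef_harmonicGap {X Y : Matrix n n 𝕜} (hX : X.PosDef) (hY : Y.PosDef) :
    (harmonicGap X Y).PosSemidef := by
  rw [harmonicGap_eq_sub_mul_inverse_add_mul_sub hX.isUnit hY.isUnit (hX.add hY).isUnit]
  simp only [← nonsing_inv_eq_ringInverse]
  have hD : (X⁻¹ - Y⁻¹)ᴴ = X⁻¹ - Y⁻¹ := (hX.inv.isHermitian.sub hY.inv.isHermitian).eq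
  simpa only [hD] using
    (hX.inv.add hY.inv).inv.posSemidef.conjTranspose_mul_mul_same (X⁻¹ - Y⁻¹)

end Matrix

theorem lambda_resolvent_ineq {n : ℕ} {A B : Matrix (Fin n) (Fin n) ℂ}
    (hA : A.PosSemidef) (hB : B.PosSemidef) (lam : ℝ) (hlam : 0 < lam)
    (hM : ((2 : ℂ)⁻¹ • (A + B)).PosSemidef) :
    ((lam : ℂ) • (A * A) * (A + (lam : ℂ) • 1)⁻¹
      + (lam : ℂ) • (B * B) * (B + (lam : ℂ) • 1)⁻¹
      - hM.sqrt * ((lam : ℂ) • A * (A + (lam : ℂ) • 1)⁻¹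
          + (lam : ℂ) • B * (B + (lam : ℂ) • 1)⁻¹) * hM.sqrt).PosSemidef := by
  have hc : (0 : ℂ) < lam := by exact_mod_cast hlam
  have hX : (A + (lam : ℂ) • 1).PosDef := Matrix.PosDef.posSemidef_add hA (.smul .one hc)
  have hY : (B + (lam : ℂ) • 1).PosDef := Matrix.PosDef.posSemidef_add hB (.smul .one hc)
  have hQQ : 2 * (hM.sqrt * hM.sqrt) = A + B := by
    rw [hM.sqrt_mul_self, two_mul, ← two_smul ℂ, smul_smul, mul_inv_cancel₀ two_ne_zero,
      one_smul]
  simp only [Matrix.nonsing_inv_eq_ringInverse]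
  rw [resolvent_sum_sub_conj_eq_harmonicGap hQQ hX.isUnit hY.isUnit (hX.add hY).isUnit]
  have hG := hX.posSemidef_harmonicGap hY
  have hQGQ := hG.conjTranspose_mul_mul_same hM.sqrt
  rw [hM.isHermitian_sqrt.eq] at hQGQ
  exact (hG.smul (pow_nonneg hc.le 3)).add (hQGQ.smul (pow_nonneg hc.le 2))
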